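/- arXiv:2502.12658 — 2 statements merged into one kernel-verified Lean document; each statement's English description precedes it below -/
import Mathlib

section
/- Let L_j, L_k, L_rj, L_rk be positive real numbers and let b > 0. If L_j < L_k and (L_j - L_rj)/L_rj < (L_k - L_rk)/L_rk, then (L_j - (L_rj + b))/(L_rj + b) < (L_k - (L_rk + b))/(L_rk + b). -/
theorem biased_criterion_preserves_pref
    (Lj Lk Lrj Lrk b : ℝ)
    (hLj : 0 < Lj) (hLk : 0 < Lk) (hLrj : 0 < Lrj) (hLrk : 0 < Lrk) (hb : 0 < b)
    (h1 : Lj < Lk)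
    (h2 : (Lj - Lrj) / Lrj < (Lk - Lrk) / Lrk) :
    (Lj - (Lrj + b)) / (Lrj + b) < (Lk - (Lrk + b)) / (Lrk + b) := by
  rw [div_lt_div_iff₀ hLrj hLrk] at h2
  rw [div_lt_div_iff₀ (by linarith) (by linarith)]
  nlinarith [mul_pos hLj hb, mul_pos hLk hb]
end

section
/- Let n ≥ 1, let L : Fin n → ℝ and L_r : Fin n → ℝ with L_r i > 0 and L i > 0 for all i, let b > 0, and fix an index j. If for every k ≠ j both L j < L k and (L j - L_r j)/(L_r j) < (L k - L_r k)/(L_r k), then for every k ≠ j one has (L j - (L_r j + b))/(L_r j + b) < (L k - (L_r k + b))/(L_r k + b); i.e., candidate j is strictly ranked first by the biased criterion. -/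
/-! Each criterion is a loss ratio minus one: `C = L / (Lr + b) - 1` and `C_r = L / Lr - 1`.
Cross-multiplying, `L j / (Lr j + b) < L k / (Lr k + b)` is the sum of `L j * Lr k < L k * Lr j`
(the calibrated ranking) and `L j * b ≤ L k * b` (the raw-loss ranking). -/

theorem div_add_lt_div_add_of_le_of_div_lt_div {a a' c c' b : ℝ} (hc : 0 < c) (hc' : 0 < c')
    (hb : 0 ≤ b) (ha : a ≤ a') (h : a / c < a' / c') : a / (c + b) < a' / (c' + b) := by
  rw [div_lt_div_iff₀ hc hc'] at h
  rw [div_lt_div_iff₀ (by positivity) (by positivity)]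
  linarith [mul_le_mul_of_nonneg_right ha hb]

theorem biased_criterion_top1_general
    (n : ℕ) (L Lr : Fin n → ℝ)
    (hLr : ∀ i, 0 < Lr i)
    (b : ℝ) (hb : 0 < b) (j : Fin n)
    (h : ∀ k, k ≠ j → L j < L k ∧ (L j - Lr j) / (Lr j) < (L k - Lr k) / (Lr k)) :
    ∀ k, k ≠ j →
      (L j - (Lr j + b)) / (Lr j + b) < (L k - (Lr k + b)) / (Lr k + b) := by
  intro k hk
  obtain ⟨hloss, hcalibrated⟩ := h k hk
  rw [← div_sub_one (hLr j).ne', ← div_sub_one (hLr k).ne', sub_lt_sub_iff_right] at hcalibrated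
  rw [← div_sub_one (add_pos (hLr j) hb).ne', ← div_sub_one (add_pos (hLr k) hb).ne',
    sub_lt_sub_iff_right]
  exact div_add_lt_div_add_of_le_of_div_lt_div (hLr j) (hLr k) hb.le hloss.le hcalibrated

theorem biased_criterion_top1
    (n : ℕ) (hn : 1 ≤ n) (L Lr : Fin n → ℝ)
    (hLr : ∀ i, 0 < Lr i) (hL : ∀ i, 0 < L i)
    (b : ℝ) (hb : 0 < b) (j : Fin n)
    (h : ∀ k, k ≠ j → L j < L k ∧ (L j - Lr j) / (Lr j) < (L k - Lr k) / (Lr k)) :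
    ∀ k, k ≠ j →
      (L j - (Lr j + b)) / (Lr j + b) < (L k - (Lr k + b)) / (Lr k + b) :=
  biased_criterion_top1_general n L Lr hLr b hb j h
end
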